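/- If X : ℝ → Matrix (Fin 3) (Fin 3) ℝ solves X'(t) = B(t) * X(t) where B(t) is skew-symmetric for each t and continuous in t, and X(0) is orthogonal (X(0)ᵀ * X(0) = 1), then X(t)ᵀ * X(t) = 1 for all t. -/

import Mathlib

/-! For skew-symmetric `B`, `d/dt (Xᵀ X) = Xᵀ (Bᵀ + B) X = 0`, so `Xᵀ X` is constant. -/

open Matrix

attribute [local instance] Matrix.normedAddCommGroup Matrix.normedSpace

section

variable {𝕜 : Type*} [NontriviallyNormedField 𝕜] [CompleteSpace 𝕜]
  {l m n : Type*} [Fintype l] [Fintype m] [Fintype n]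

theorem HasDerivAt.matrix_transpose {A : 𝕜 → Matrix m n 𝕜} {A' : Matrix m n 𝕜} {t : 𝕜}
    (hA : HasDerivAt A A' t) : HasDerivAt (fun s => (A s)ᵀ) A'ᵀ t :=
  (transposeLinearEquiv m n 𝕜 𝕜).toLinearMap.toContinuousLinearMap.hasFDerivAt.comp_hasDerivAt t hA

theorem HasDerivAt.matrix_mul {A : 𝕜 → Matrix l m 𝕜} {B : 𝕜 → Matrix m n 𝕜}
    {A' : Matrix l m 𝕜} {B' : Matrix m n 𝕜} {t : 𝕜}
    (hA : HasDerivAt A A' t) (hB : HasDerivAt B B' t) :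
    HasDerivAt (fun s => A s * B s) (A' * B t + A t * B') t := by
  rw [add_comm]
  exact (mulLinearMap 𝕜 : Matrix l m 𝕜 →ₗ[𝕜] Matrix m n 𝕜 →ₗ[𝕜] _).toContinuousBilinearMap
    |>.hasDerivAt_of_bilinear (fun _ => hA) (fun _ => hB)

end

theorem transpose_mul_self_eq_of_hasDerivAt_skew_mul {𝕜 n : Type*} [RCLike 𝕜] [Fintype n]
    {B X : 𝕜 → Matrix n n 𝕜} (hB : ∀ t, (B t)ᵀ = -B t)
    (hX : ∀ t, HasDerivAt X (B t * X t) t) (t s : 𝕜) :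
    (X t)ᵀ * X t = (X s)ᵀ * X s := by
  have hderiv : ∀ r, HasDerivAt (fun s => (X s)ᵀ * X s) 0 r := fun r => by
    convert (hX r).matrix_transpose.matrix_mul (hX r) using 1
    rw [transpose_mul, hB, Matrix.mul_neg, Matrix.neg_mul, Matrix.mul_assoc, neg_add_cancel]
  exact is_const_of_deriv_eq_zero (fun r => (hderiv r).differentiableAt)
    (fun r => (hderiv r).deriv) t s

theorem stmt_4_general (B : ℝ → Matrix (Fin 3) (Fin 3) ℝ)
    (hBskew : ∀ t, (B t)ᵀ = -(B t))
    (X : ℝ → Matrix (Fin 3) (Fin 3) ℝ)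
    (hX : ∀ t : ℝ, HasDerivAt X (B t * X t) t)
    (hX0 : (X 0)ᵀ * X 0 = 1) :
    ∀ t : ℝ, (X t)ᵀ * X t = 1 := fun t =>
  (transpose_mul_self_eq_of_hasDerivAt_skew_mul hBskew hX t 0).trans hX0

theorem stmt_4 (B : ℝ → Matrix (Fin 3) (Fin 3) ℝ) (hBc : Continuous B)
    (hBskew : ∀ t, (B t)ᵀ = -(B t))
    (X : ℝ → Matrix (Fin 3) (Fin 3) ℝ)
    (hX : ∀ t : ℝ, HasDerivAt X (B t * X t) t)
    (hX0 : (X 0)ᵀ * X 0 = 1) :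
    ∀ t : ℝ, (X t)ᵀ * X t = 1 :=
  stmt_4_general B hBskew X hX hX0
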